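/- Let B ⊆ Z_{≥0}^{m_1+...+m_n} be a set of vectors of equal modulus satisfying the generalized bi-exchange property (for a, b ∈ B and a_{ij} > b_{ij}, there is l in block i with a_{il} < b_{il} and a − e_{ij} + e_{il} ∈ B). Fix a coordinate (i,j), let r = max{a_{ij} : a ∈ B}, and let b ∈ B with b_{ij} < r. Then there exists u ∈ B with u_{ij} = r such that u_{i'j'} ≤ b_{i'j'} for all coordinates (i',j') ≠ (i,j). -/

import Mathlib

open Finset

/-- Index set: pairs (i,j) with 1 ≤ i ≤ n, 1 ≤ j ≤ m i. -/
abbrev Idx (n : ℕ) (m : Fin n → ℕ) := (i : Fin n) × Fin (m i)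

/-- The vector a − e_{ij} + e_{il}. -/
def exchStep {n : ℕ} {m : Fin n → ℕ} (a : Idx n m → ℕ) (i : Fin n) (j l : Fin (m i)) :
    Idx n m → ℕ :=
  fun p => if p = ⟨i, j⟩ then a p - 1 else if p = ⟨i, l⟩ then a p + 1 else a p

/-- The generalized bi-exchange property. -/
def BiExchange {n : ℕ} {m : Fin n → ℕ} (B : Set (Idx n m → ℕ)) : Prop :=
  ∀ a ∈ B, ∀ b ∈ B, ∀ (i : Fin n) (j : Fin (m i)),
    b ⟨i, j⟩ < a ⟨i, j⟩ →
      ∃ l : Fin (m i), a ⟨i, l⟩ < b ⟨i, l⟩ ∧ exchStep a i j l ∈ B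

/-! Descent on `excess u b = ∑ p, (u p - b p)` (truncated subtraction), the total amount by which
`u` exceeds `b`. If `u p > b p` at some `p ≠ q`, the exchange property applied to `u, b` at `p`
moves one unit from `p` to a coordinate `l` where `u` is below `b`: this stays in `B`, lowers the
excess, and keeps the `q`-coordinate, since `l = q` would force `u q < b q`. Starting from an
element with maximal `q`-coordinate, the descent ends at the required `u`. -/

section

variable {n : ℕ} {m : Fin n → ℕ}

def excess (u b : Idx n m → ℕ) : ℕ := ∑ p, (u p - b p)

lemma exchStep_apply_of_ne {a : Idx n m → ℕ} {i : Fin n} {j l : Fin (m i)} {p : Idx n m}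
    (hj : p ≠ ⟨i, j⟩) (hl : p ≠ ⟨i, l⟩) : exchStep a i j l p = a p := by
  simp only [exchStep, if_neg hj, if_neg hl]

lemma excess_exchStep_lt {a b : Idx n m → ℕ} {i : Fin n} {j l : Fin (m i)}
    (hj : b ⟨i, j⟩ < a ⟨i, j⟩) (hl : a ⟨i, l⟩ < b ⟨i, l⟩) :
    excess (exchStep a i j l) b < excess a b := by
  refine Finset.sum_lt_sum (fun p _ => ?_) ⟨⟨i, j⟩, mem_univ _, ?_⟩
  · simp only [exchStep]
    split_ifs with hpj hpl
    · omega
    · subst hpl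
      omega
    · exact le_rfl
  · simp only [exchStep, ↓reduceIte]
    omega

lemma exists_exchStep_mem_excess_lt {B : Set (Idx n m → ℕ)} (hex : BiExchange B)
    {u b : Idx n m → ℕ} (hu : u ∈ B) (hb : b ∈ B) {q p : Idx n m} (hq : b q ≤ u q)
    (hpq : p ≠ q) (hp : b p < u p) :
    ∃ v ∈ B, v q = u q ∧ excess v b < excess u b := by
  obtain ⟨i, j⟩ := p
  obtain ⟨l, hl, hmem⟩ := hex u hu b hb i j hp
  have hql : q ≠ ⟨i, l⟩ := by
    rintro rfl
    omega
  exact ⟨_, hmem, exchStep_apply_of_ne hpq.symm hql, excess_exchStep_lt hp hl⟩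

theorem exists_mem_apply_eq_and_le_off {B : Set (Idx n m → ℕ)} (hex : BiExchange B)
    {b : Idx n m → ℕ} (hb : b ∈ B) (q : Idx n m) :
    ∀ u ∈ B, b q ≤ u q → ∃ v ∈ B, v q = u q ∧ ∀ p, p ≠ q → v p ≤ b p := by
  intro u
  induction h : excess u b using Nat.strong_induction_on generalizing u with
  | _ N ih =>
    intro hu hq
    by_cases hle : ∀ p, p ≠ q → u p ≤ b p
    · exact ⟨u, hu, rfl, hle⟩
    simp only [not_forall, not_le] at hle
    obtain ⟨p, hpq, hp⟩ := hle
    obtain ⟨v, hv, hvq, hlt⟩ := exists_exchStep_mem_excess_lt hex hu hb hq hpq hp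
    obtain ⟨w, hw, hwq, hwb⟩ := ih _ (h ▸ hlt) v rfl hv (hvq ▸ hq)
    exact ⟨w, hw, hwq.trans hvq, hwb⟩

end

theorem stmt13_general {n : ℕ} {m : Fin n → ℕ} (B : Set (Idx n m → ℕ))
    (hex : BiExchange B)
    (i : Fin n) (j : Fin (m i)) (r : ℕ)
    (hub : ∀ a ∈ B, a ⟨i, j⟩ ≤ r) (hmax : ∃ a ∈ B, a ⟨i, j⟩ = r)
    (b : Idx n m → ℕ) (hb : b ∈ B) :
    ∃ u ∈ B, u ⟨i, j⟩ = r ∧ ∀ p : Idx n m, p ≠ ⟨i, j⟩ → u p ≤ b p := by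
  obtain ⟨a, ha, har⟩ := hmax
  obtain ⟨u, hu, hua, hle⟩ :=
    exists_mem_apply_eq_and_le_off hex hb ⟨i, j⟩ a ha (har ▸ hub b hb)
  exact ⟨u, hu, hua.trans har, hle⟩

/-- for b ∈ B with b_{ij} < r = max of the (i,j)-coordinates on B, there is
u ∈ B with u_{ij} = r and u ≤ b at all other coordinates. -/
theorem stmt13 {n : ℕ} {m : Fin n → ℕ} (B : Set (Idx n m → ℕ)) (t : ℕ)
    (hmod : ∀ a ∈ B, (∑ p, a p) = t) (hex : BiExchange B)
    (i : Fin n) (j : Fin (m i)) (r : ℕ)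
    (hub : ∀ a ∈ B, a ⟨i, j⟩ ≤ r) (hmax : ∃ a ∈ B, a ⟨i, j⟩ = r)
    (b : Idx n m → ℕ) (hb : b ∈ B) (hbr : b ⟨i, j⟩ < r) :
    ∃ u ∈ B, u ⟨i, j⟩ = r ∧ ∀ p : Idx n m, p ≠ ⟨i, j⟩ → u p ≤ b p :=
  stmt13_general B hex i j r hub hmax b hb
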